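/- arXiv:1401.4538 — 2 statements merged into one kernel-verified Lean document; each statement's English description precedes it below -/
import Mathlib

section
/- Let R be a model of MELL, i.e. a symmetric monoidal category with an exponential ! such that the tensor product ⨂ of n copies of !A is isomorphic to !A for every finite n. Let v be a valuation of atoms in R and interpret MELL formulas φ both in R (as ⟦φ⟧) and in D(R) (as a dialectica object (X_φ, Y_φ, |φ|)). Then for every additive-free formula φ: (1) there exists x : X_φ together with, for every y : Y_φ, a morphism ⟦φ⟧ → |φ|^x_y in R; and (2) there exists y : Y_φ together with, for every x : X_φ, a morphism |φ|^x_y → ⟦φ⟧ in R. -/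
open CategoryTheory MonoidalCategory

universe v u

/-- Additive-free formulas of `MELL`: atoms, unit, linear negation, tensor, and the
exponential. -/
inductive MELL (atom : Type) : Type
  | atom : atom → MELL atom
  | one : MELL atom
  | neg : MELL atom → MELL atom
  | tens : MELL atom → MELL atom → MELL atom
  | bang : MELL atom → MELL atom

/-- Objects of the dialectica category over `R`. -/
structure DialObj (R : Type u) [Category.{v} R] where
  X : Type
  Y : Type
  G : X → Y → R

variable {R : Type u} [Category.{v} R] [MonoidalCategory R]

/-- The monoidal fold of a list of objects. -/
noncomputable def listTens : List R → R
  | [] => 𝟙_ R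
  | a :: l => a ⊗ listTens l

/-- The monoidal fold over a finite multiset. -/
noncomputable def mtens {Y : Type} (m : Multiset Y) (F : Y → R) : R :=
  listTens ((m.map F).toList)

variable {atom : Type}

/-- The interpretation `⟦φ⟧` of a formula in the model `R`, given a duality `Dob`, an
exponential `Eob` and a valuation `val` of atoms. -/
def rInterp (Dob Eob : R → R) (val : atom → R) : MELL atom → R
  | .atom p => val p
  | .one => 𝟙_ R
  | .neg φ => Dob (rInterp Dob Eob val φ)
  | .tens φ ψ => rInterp Dob Eob val φ ⊗ rInterp Dob Eob val ψ
  | .bang φ => Eob (rInterp Dob Eob val φ)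

/-- The dialectica interpretation `(X_φ, Y_φ, |φ|)` of a formula in `D(R)`. -/
noncomputable def dInterp (Dob Eob : R → R) (val : atom → R) : MELL atom → DialObj R
  | .atom p => ⟨PUnit, PUnit, fun _ _ => val p⟩
  | .one => ⟨PUnit, PUnit, fun _ _ => 𝟙_ R⟩
  | .neg φ =>
    let A := dInterp Dob Eob val φ
    ⟨A.Y, A.X, fun y x => Dob (A.G x y)⟩
  | .tens φ ψ =>
    let A := dInterp Dob Eob val φ
    let B := dInterp Dob Eob val ψ
    ⟨A.X × B.X, (B.X → A.Y) × (A.X → B.Y),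
      fun p fg => A.G p.1 (fg.1 p.2) ⊗ B.G p.2 (fg.2 p.1)⟩
  | .bang φ =>
    let A := dInterp Dob Eob val φ
    ⟨A.X, A.X → Multiset A.Y, fun x f => mtens (f x) fun y => Eob (A.G x y)⟩

lemma mtens_const_eq {Y : Type} (m : Multiset Y) (e : R) :
    mtens m (fun _ => e) = listTens (List.replicate (Multiset.card m) e) := by
  unfold mtens
  congr 1
  rw [List.eq_replicate_iff]
  refine ⟨by simp, ?_⟩
  intro b hb
  rw [Multiset.mem_toList, Multiset.mem_map] at hb
  obtain ⟨y, _, h⟩ := hb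
  exact h.symm

lemma listTens_from (e : R) (unit : e ⟶ 𝟙_ R) (dup : e ⟶ e ⊗ e) :
    ∀ (l : List R), (∀ b ∈ l, Nonempty (e ⟶ b)) → Nonempty (e ⟶ listTens l)
  | [], _ => ⟨unit⟩
  | b :: l, h => by
    obtain ⟨g⟩ := h b (by simp)
    obtain ⟨G⟩ := listTens_from e unit dup l (fun c hc => h c (by simp [hc]))
    exact ⟨dup ≫ (g ⊗ₘ G)⟩

/-- The relative completeness lemma: for every additive-free `MELL` formula `φ`,
(1) there is a witness `x : X_φ` with morphisms `⟦φ⟧ ⟶ |φ|^x_y` for all `y`, and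
(2) a counter-witness `y : Y_φ` with morphisms `|φ|^x_y ⟶ ⟦φ⟧` for all `x`. -/
theorem relative_completeness_lemma
    (Dob : R → R) (Dmap : ∀ {a b : R}, (a ⟶ b) → (Dob b ⟶ Dob a))
    (Eob : R → R) (Emap : ∀ {a b : R}, (a ⟶ b) → (Eob a ⟶ Eob b))
    (hE : ∀ (a : R) {ι : Type} (m : Multiset ι),
      Nonempty (mtens m (fun _ => Eob a) ≅ Eob a))
    (val : atom → R) (φ : MELL atom) :
    Nonempty ((x : (dInterp Dob Eob val φ).X) ×
      ((y : (dInterp Dob Eob val φ).Y) →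
        (rInterp Dob Eob val φ ⟶ (dInterp Dob Eob val φ).G x y))) ∧
    Nonempty ((y : (dInterp Dob Eob val φ).Y) ×
      ((x : (dInterp Dob Eob val φ).X) →
        ((dInterp Dob Eob val φ).G x y ⟶ rInterp Dob Eob val φ))) := by
  induction φ with
  | atom p =>
    exact ⟨⟨⟨PUnit.unit, fun _ => 𝟙 _⟩⟩, ⟨⟨PUnit.unit, fun _ => 𝟙 _⟩⟩⟩
  | one =>
    exact ⟨⟨⟨PUnit.unit, fun _ => 𝟙 _⟩⟩, ⟨⟨PUnit.unit, fun _ => 𝟙 _⟩⟩⟩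
  | neg φ ih =>
    obtain ⟨⟨⟨x, hx⟩⟩, ⟨⟨y, hy⟩⟩⟩ := ih
    exact ⟨⟨⟨y, fun x' => Dmap (hy x')⟩⟩, ⟨⟨x, fun y' => Dmap (hx y')⟩⟩⟩
  | tens φ ψ ihφ ihψ =>
    obtain ⟨⟨⟨x₁, hx₁⟩⟩, ⟨⟨y₁, hy₁⟩⟩⟩ := ihφ
    obtain ⟨⟨⟨x₂, hx₂⟩⟩, ⟨⟨y₂, hy₂⟩⟩⟩ := ihψ
    constructor
    · exact ⟨⟨(x₁, x₂), fun fg => hx₁ (fg.1 x₂) ⊗ₘ hx₂ (fg.2 x₁)⟩⟩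
    · exact ⟨⟨(fun _ => y₁, fun _ => y₂), fun x => hy₁ x.1 ⊗ₘ hy₂ x.2⟩⟩
  | bang φ ihφ =>
    obtain ⟨⟨⟨x₁, hx₁⟩⟩, ⟨⟨y₁, hy₁⟩⟩⟩ := ihφ
    have ρ : ∀ n : ℕ,
        Nonempty (listTens (List.replicate n (Eob (rInterp Dob Eob val φ))) ≅
          Eob (rInterp Dob Eob val φ)) := by
      intro n
      obtain ⟨i⟩ := hE (rInterp Dob Eob val φ) (Multiset.replicate n PUnit.unit)
      rw [mtens_const_eq, Multiset.card_replicate] at i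
      exact ⟨i⟩
    obtain ⟨ρ0⟩ := ρ 0
    obtain ⟨ρ1⟩ := ρ 1
    obtain ⟨ρ2⟩ := ρ 2
    have unit : (Eob (rInterp Dob Eob val φ) ⟶ 𝟙_ R) := ρ0.inv
    have dup : (Eob (rInterp Dob Eob val φ) ⟶
        Eob (rInterp Dob Eob val φ) ⊗ Eob (rInterp Dob Eob val φ)) := by
      refine ρ2.inv ≫ ?_
      exact Eob (rInterp Dob Eob val φ) ◁
        (ρ1.hom : (Eob (rInterp Dob Eob val φ) ⊗ 𝟙_ R) ⟶ Eob (rInterp Dob Eob val φ))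
    constructor
    · refine ⟨⟨x₁, fun f => ?_⟩⟩
      show Eob (rInterp Dob Eob val φ) ⟶
        listTens (((f x₁).map (fun y => Eob ((dInterp Dob Eob val φ).G x₁ y))).toList)
      refine (listTens_from _ unit dup _ ?_).some
      intro b hb
      rw [Multiset.mem_toList, Multiset.mem_map] at hb
      obtain ⟨y, _, h⟩ := hb
      exact ⟨Emap (hx₁ y) ≫ eqToHom h⟩
    · refine ⟨⟨fun _ => 0, fun x => ?_⟩⟩
      show mtens (0 : Multiset (dInterp Dob Eob val φ).Y)
        (fun y => Eob ((dInterp Dob Eob val φ).G x y)) ⟶ Eob (rInterp Dob Eob val φ)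
      have h0 : mtens (0 : Multiset (dInterp Dob Eob val φ).Y)
          (fun y => Eob ((dInterp Dob Eob val φ).G x y))
          = listTens (List.replicate 0 (Eob (rInterp Dob Eob val φ))) := by
        unfold mtens; simp
      exact eqToHom h0 ≫ ρ0.hom
end

section
/- Under the hypotheses of the relative completeness lemma, if an additive-free MELL formula φ is true in the dialectica model D(R) (i.e. there is a witness x : X_φ and for every y : Y_φ a morphism 1 → |φ|^x_y in R), then φ is true in R (there is a morphism 1 → ⟦φ⟧_v in R) for every valuation v. -/
open CategoryTheory MonoidalCategory

universe v u

variable {R : Type u} [Category.{v} R] [MonoidalCategory R]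

variable {atom : Type}

section Aux

lemma listTens_to_replicate {c : R} :
    ∀ (L : List R), (∀ a ∈ L, Nonempty (a ⟶ c)) →
      Nonempty (listTens L ⟶ listTens (List.replicate L.length c)) := by
  intro L
  induction L with
  | nil => intro _; exact ⟨𝟙 _⟩
  | cons a L ih =>
    intro h
    obtain ⟨f⟩ := h a (by simp)
    obtain ⟨g⟩ := ih (fun b hb => h b (by simp [hb]))
    exact ⟨(f ⊗ₘ g : a ⊗ listTens L ⟶ c ⊗ listTens (List.replicate L.length c))⟩

lemma listTens_from_replicate {c : R} :
    ∀ (L : List R), (∀ a ∈ L, Nonempty (c ⟶ a)) →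
      Nonempty (listTens (List.replicate L.length c) ⟶ listTens L) := by
  intro L
  induction L with
  | nil => intro _; exact ⟨𝟙 _⟩
  | cons a L ih =>
    intro h
    obtain ⟨f⟩ := h a (by simp)
    obtain ⟨g⟩ := ih (fun b hb => h b (by simp [hb]))
    exact ⟨(f ⊗ₘ g : c ⊗ listTens (List.replicate L.length c) ⟶ a ⊗ listTens L)⟩

lemma mtens_const {Y : Type} (m : Multiset Y) (c : R) :
    mtens m (fun _ => c) = listTens (List.replicate (Multiset.card m) c) := by
  unfold mtens
  congr 1
  rw [List.eq_replicate_iff]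
  constructor
  · simp
  · intro b hb
    have : b ∈ m.map (fun _ => c) := Multiset.mem_toList.mp hb
    obtain ⟨y, _, rfl⟩ := Multiset.mem_map.mp this
    rfl

lemma mtens_to_const {Y : Type} (m : Multiset Y) (F : Y → R) (c : R)
    (h : ∀ y, Nonempty (F y ⟶ c)) :
    Nonempty (mtens m F ⟶ mtens m (fun _ => c)) := by
  rw [mtens_const]
  obtain ⟨g⟩ := listTens_to_replicate ((m.map F).toList) (by
    intro a ha
    obtain ⟨y, _, rfl⟩ := Multiset.mem_map.mp (Multiset.mem_toList.mp ha)
    exact h y)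
  have hlen : ((m.map F).toList).length = Multiset.card m := by simp
  rw [show mtens m F = listTens ((m.map F).toList) from rfl]
  exact ⟨g ≫ eqToHom (by rw [hlen])⟩

lemma mtens_from_const {Y : Type} (m : Multiset Y) (F : Y → R) (c : R)
    (h : ∀ y, Nonempty (c ⟶ F y)) :
    Nonempty (mtens m (fun _ => c) ⟶ mtens m F) := by
  rw [mtens_const]
  obtain ⟨g⟩ := listTens_from_replicate ((m.map F).toList) (by
    intro a ha
    obtain ⟨y, _, rfl⟩ := Multiset.mem_map.mp (Multiset.mem_toList.mp ha)
    exact h y)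
  have hlen : ((m.map F).toList).length = Multiset.card m := by simp
  exact ⟨(eqToHom (by rw [hlen]) :
    listTens (List.replicate (Multiset.card m) c) ⟶
      listTens (List.replicate ((m.map F).toList).length c)) ≫ g⟩

lemma dInterp_nonempty (Dob Eob : R → R) (val : atom → R) :
    ∀ φ : MELL atom,
      Nonempty (dInterp Dob Eob val φ).X ∧ Nonempty (dInterp Dob Eob val φ).Y := by
  intro φ
  induction φ with
  | atom p => exact ⟨⟨⟨⟩⟩, ⟨⟨⟩⟩⟩
  | one => exact ⟨⟨⟨⟩⟩, ⟨⟨⟩⟩⟩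
  | neg φ ih => exact ⟨ih.2, ih.1⟩
  | tens φ ψ ihφ ihψ =>
    exact ⟨⟨⟨ihφ.1.some, ihψ.1.some⟩⟩,
      ⟨⟨fun _ => ihφ.2.some, fun _ => ihψ.2.some⟩⟩⟩
  | bang φ ih => exact ⟨ih.1, ⟨fun _ => 0⟩⟩

lemma dInterp_compare (Dob : R → R) (Dmap : ∀ {a b : R}, (a ⟶ b) → (Dob b ⟶ Dob a))
    (Eob : R → R) (Emap : ∀ {a b : R}, (a ⟶ b) → (Eob a ⟶ Eob b))
    (hE : ∀ (a : R) {ι : Type} (m : Multiset ι),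
      Nonempty (mtens m (fun _ => Eob a) ≅ Eob a))
    (val : atom → R) :
    ∀ φ : MELL atom,
      (∀ x y, Nonempty ((dInterp Dob Eob val φ).G x y ⟶ rInterp Dob Eob val φ)) ∧
      (∀ x y, Nonempty (rInterp Dob Eob val φ ⟶ (dInterp Dob Eob val φ).G x y)) := by
  intro φ
  induction φ with
  | atom p => exact ⟨fun _ _ => ⟨𝟙 _⟩, fun _ _ => ⟨𝟙 _⟩⟩
  | one => exact ⟨fun _ _ => ⟨𝟙 _⟩, fun _ _ => ⟨𝟙 _⟩⟩
  | neg φ ih =>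
    refine ⟨fun y x => ?_, fun y x => ?_⟩
    · obtain ⟨f⟩ := ih.2 x y
      exact ⟨Dmap f⟩
    · obtain ⟨f⟩ := ih.1 x y
      exact ⟨Dmap f⟩
  | tens φ ψ ihφ ihψ =>
    refine ⟨fun p fg => ?_, fun p fg => ?_⟩
    · obtain ⟨f⟩ := ihφ.1 p.1 (fg.1 p.2)
      obtain ⟨g⟩ := ihψ.1 p.2 (fg.2 p.1)
      exact ⟨f ⊗ₘ g⟩
    · obtain ⟨f⟩ := ihφ.2 p.1 (fg.1 p.2)
      obtain ⟨g⟩ := ihψ.2 p.2 (fg.2 p.1)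
      exact ⟨f ⊗ₘ g⟩
  | bang φ ih =>
    refine ⟨fun x f => ?_, fun x f => ?_⟩
    · obtain ⟨g⟩ := mtens_to_const (f x)
        (fun y => Eob ((dInterp Dob Eob val φ).G x y))
        (Eob (rInterp Dob Eob val φ))
        (fun y => ⟨Emap (ih.1 x y).some⟩)
      exact ⟨g ≫ (hE (rInterp Dob Eob val φ) (f x)).some.hom⟩
    · obtain ⟨g⟩ := mtens_from_const (f x)
        (fun y => Eob ((dInterp Dob Eob val φ).G x y))
        (Eob (rInterp Dob Eob val φ))
        (fun y => ⟨Emap (ih.2 x y).some⟩)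
      exact ⟨(hE (rInterp Dob Eob val φ) (f x)).some.inv ≫ g⟩

end Aux

/-- Relative completeness: if an additive-free `MELL` formula is true in the dialectica
model `D(R)` then it is true in `R`, for every valuation. -/
theorem relative_completeness
    (Dob : R → R) (Dmap : ∀ {a b : R}, (a ⟶ b) → (Dob b ⟶ Dob a))
    (Eob : R → R) (Emap : ∀ {a b : R}, (a ⟶ b) → (Eob a ⟶ Eob b))
    (hE : ∀ (a : R) {ι : Type} (m : Multiset ι),
      Nonempty (mtens m (fun _ => Eob a) ≅ Eob a))
    (φ : MELL atom)
    (htrue : ∀ val : atom → R,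
      Nonempty ((x : (dInterp Dob Eob val φ).X) ×
        ((y : (dInterp Dob Eob val φ).Y) →
          (𝟙_ R ⟶ (dInterp Dob Eob val φ).G x y)))) :
    ∀ val : atom → R, Nonempty (𝟙_ R ⟶ rInterp Dob Eob val φ) := by
  intro val
  obtain ⟨x, π⟩ := (htrue val).some
  obtain ⟨y⟩ := (dInterp_nonempty Dob Eob val φ).2
  obtain ⟨σ⟩ := (dInterp_compare Dob Dmap Eob Emap hE val φ).1 x y
  exact ⟨π y ≫ σ⟩
end
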